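/- Let W be an algebraic Weyl curvature tensor on a Euclidean vector space V of dimension n ≥ 4. The space E_W is closed under the anticommutator: if h₁, h₂ ∈ E_W, then h₁h₂ + h₂h₁ ∈ E_W. In particular, if h ∈ E_W then h² ∈ E_W. -/
import Mathlib


/- Common setup: algebraic Weyl curvature tensors on a Euclidean vector space. -/

open scoped RealInnerProductSpace
open Finset

/-- A curvature-type 4-linear tensor on `V`. -/
abbrev Tensor4 (V : Type*) [NormedAddCommGroup V] [InnerProductSpace ℝ V] : Type _ :=
  V →ₗ[ℝ] V →ₗ[ℝ] V →ₗ[ℝ] V →ₗ[ℝ] ℝ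

variable {V : Type*} [NormedAddCommGroup V] [InnerProductSpace ℝ V] [FiniteDimensional ℝ V]

/-- `W` is an algebraic Weyl curvature tensor: it has the symmetries of a curvature
tensor, satisfies the first Bianchi identity, and is totally trace-free. -/
structure IsWeylTensor (W : Tensor4 V) : Prop where
  antisym₁ : ∀ x y z u, W x y z u = - W y x z u
  antisym₂ : ∀ x y z u, W x y z u = - W x y u z
  pair_symm : ∀ x y z u, W x y z u = W z u x y
  bianchi : ∀ x y z u, W x y z u + W y z x u + W z x y u = 0
  trace_free : ∀ (b : OrthonormalBasis (Fin (Module.finrank ℝ V)) ℝ V) (x y : V),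
      ∑ i, W x (b i) y (b i) = 0

/-- The extension of `W` to endomorphisms, `W(h) = Σᵢ W(eᵢ, ·, h eᵢ, ·)`,
viewed as a bilinear form (identified with an endomorphism via the metric). -/
noncomputable def weylExt {ι : Type*} [Fintype ι]
    (W : Tensor4 V) (b : OrthonormalBasis ι ℝ V) (h : V →ₗ[ℝ] V) (v w : V) : ℝ :=
  ∑ i, W (b i) v (h (b i)) w

/-- The space `E_W`: endomorphisms `h` with `W(x,y,hz,·) + W(y,z,hx,·) + W(z,x,hy,·) = 0`. -/
def memE (W : Tensor4 V) (h : V →ₗ[ℝ] V) : Prop :=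
  ∀ x y z u, W x y (h z) u + W y z (h x) u + W z x (h y) u = 0

/-- The Lie algebra `g_W` of the symmetry group of `W`. -/
def memG (W : Tensor4 V) (h : V →ₗ[ℝ] V) : Prop :=
  ∀ x y z u, W (h x) y z u + W x (h y) z u + W x y (h z) u + W x y z (h u) = 0

/-- Skew-symmetric endomorphisms (identified with 2-forms). -/
def IsSkew (F : V →ₗ[ℝ] V) : Prop := ∀ v w, ⟪F v, w⟫ = - ⟪v, F w⟫

/-- Symmetric endomorphisms. -/
def IsSym (F : V →ₗ[ℝ] V) : Prop := ∀ v w, ⟪F v, w⟫ = ⟪v, F w⟫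

/-- The bilinear form `g(F·,·)` associated to an endomorphism `F`. -/
noncomputable def form (F : V →ₗ[ℝ] V) (v w : V) : ℝ := ⟪F v, w⟫

set_option maxHeartbeats 4000000 in
omit [FiniteDimensional ℝ V] in
private theorem weyl_anticomm_key (W : Tensor4 V) (hW : IsWeylTensor W)
    (h₁ h₂ : V →ₗ[ℝ] V) (hE₁ : memE W h₁) (hE₂ : memE W h₂) (x y z u : V) :
    (W x y (h₁ (h₂ z)) u + W x y (h₂ (h₁ z)) u) +
    (W y z (h₁ (h₂ x)) u + W y z (h₂ (h₁ x)) u) +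
    (W z x (h₁ (h₂ y)) u + W z x (h₂ (h₁ y)) u) = 0 := by
  linear_combination
      hE₁ x (h₂ y) z u
      + hE₁ x y (h₂ z) u
      + hE₁ (h₂ x) y u z
      - hE₁ x y u (h₂ z)
      - hE₁ (h₂ x) z u y
      + hE₁ x z u (h₂ y)
      + hE₂ (h₁ x) y z u
      + hE₂ x (h₁ y) z u
      + hE₂ x y (h₁ z) u
      - hE₂ x y z (h₁ u)
      + hW.antisym₁ u x (h₁ y) (h₂ z)
      + hW.antisym₁ u x (h₂ y) (h₁ z)
      - hW.antisym₂ u x (h₂ y) (h₁ z)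
      - hW.antisym₁ u (h₁ x) y (h₂ z)
      + hW.bianchi u (h₁ x) y (h₂ z)
      + hW.antisym₂ u (h₁ x) (h₂ y) z
      - hW.bianchi u (h₁ x) (h₂ y) z
      - hW.bianchi u (h₁ x) z (h₂ y)
      + hW.antisym₁ u (h₁ (h₂ x)) y z
      - hW.antisym₂ u (h₁ (h₂ x)) y z
      + hW.bianchi u (h₁ (h₂ x)) z y
      - hW.antisym₁ u (h₂ x) y (h₁ z)
      + hW.antisym₂ u (h₂ x) y (h₁ z)
      - hW.antisym₁ u (h₂ x) (h₁ y) z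
      - hW.antisym₁ u y (h₁ (h₂ x)) z
      + hW.pair_symm u y (h₁ (h₂ x)) z
      + hW.antisym₁ u (h₂ y) (h₁ x) z
      - hW.pair_symm u (h₂ y) (h₁ x) z
      - hW.antisym₁ (h₁ u) x (h₂ y) z
      + hW.bianchi (h₁ u) x (h₂ y) z
      + hW.antisym₁ (h₁ u) (h₂ x) y z
      - hW.bianchi (h₁ u) (h₂ x) y z
      + hW.antisym₁ (h₁ u) y (h₂ x) z
      - hW.pair_symm (h₁ u) y (h₂ x) z
      - hW.antisym₁ (h₁ u) (h₂ y) x z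
      + hW.pair_symm (h₁ u) (h₂ y) x z
      - hW.pair_symm x u (h₁ y) (h₂ z)
      - hW.pair_symm x u (h₂ y) (h₁ z)
      + hW.pair_symm x (h₁ u) (h₂ y) z
      + hW.antisym₂ x y (h₁ u) (h₂ z)
      - hW.bianchi x (h₁ y) (h₂ z) u
      - hW.antisym₂ x (h₂ y) (h₁ u) z
      + hW.bianchi x (h₂ y) z (h₁ u)
      - hW.bianchi x (h₂ y) (h₁ z) u
      + hW.pair_symm (h₁ x) u y (h₂ z)
      - hW.antisym₂ (h₁ x) y u (h₂ z)
      + hW.antisym₂ (h₁ x) (h₂ y) u z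
      - hW.bianchi (h₁ x) (h₂ y) z u
      - hW.pair_symm (h₁ (h₂ x)) u y z
      + hW.pair_symm (h₂ x) u y (h₁ z)
      + hW.pair_symm (h₂ x) u (h₁ y) z
      - hW.pair_symm (h₂ x) (h₁ u) y z

/-- `E_W` is closed under the anticommutator; in particular if `h ∈ E_W`
then `h² ∈ E_W`. -/
theorem stmt10 (hn : 4 ≤ Module.finrank ℝ V) (W : Tensor4 V) (hW : IsWeylTensor W)
    (h₁ h₂ : V →ₗ[ℝ] V) (hE₁ : memE W h₁) (hE₂ : memE W h₂) :
    memE W (h₁ ∘ₗ h₂ + h₂ ∘ₗ h₁) ∧ memE W (h₁ ∘ₗ h₁) := by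
  constructor
  · intro x y z u
    have h := weyl_anticomm_key W hW h₁ h₂ hE₁ hE₂ x y z u
    simp only [LinearMap.add_apply, LinearMap.coe_comp, Function.comp_apply, map_add] at *
    linear_combination h
  · intro x y z u
    have h := weyl_anticomm_key W hW h₁ h₁ hE₁ hE₁ x y z u
    simp only [LinearMap.coe_comp, Function.comp_apply] at *
    linear_combination h / 2
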